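/- Let n ≥ 1 be an integer, α > −1 a real number, ξ ∈ Ω_n, d := min(n+ξ, n), and let u, v ∈ ℂ^d be unit vectors that are linearly independent over ℂ. Then there exists X in the star-subalgebra 𝒜 of Π_{η∈Ω_n} M_{d_η}(ℂ) generated by {γ(a) : a ∈ L∞_lim([0,1))} such that ⟨X_ξ u, u⟩ ≠ ⟨X_ξ v, v⟩. -/

import Mathlib

open MeasureTheory Filter
open scoped ENNReal

noncomputable section

/-- Generalized binomial coefficient `x(x-1)⋯(x-j+1)/j!`. -/
def gbinom (x : ℝ) (j : ℕ) : ℝ :=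
  (∏ i ∈ Finset.range j, (x - i)) / (Nat.factorial j)

/-- Shifted Jacobi polynomial `Q_m^{(α,β)}` on `[0,1]`:
`Q_m^{(α,β)}(t) = Σ_{k=0}^m binom(α+β+m+k,k)·binom(β+m,m-k)·(-1)^{m-k}·t^k`. -/
def jacQ (α β : ℝ) (m : ℕ) (t : ℝ) : ℝ :=
  ∑ k ∈ Finset.range (m + 1),
    gbinom (α + β + m + k) k * gbinom (β + m) (m - k) * (-1 : ℝ) ^ (m - k) * t ^ k

/-- Normalizing coefficient
`κ(α,β,m) = sqrt((2m+α+β+1)·Γ(m+α+β+1)·m!/(Γ(m+α+1)·Γ(m+β+1)))`. -/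
def jacCoef (α β : ℝ) (m : ℕ) : ℝ :=
  Real.sqrt ((2 * m + α + β + 1) * Real.Gamma (m + α + β + 1) * (Nat.factorial m) /
    (Real.Gamma (m + α + 1) * Real.Gamma (m + β + 1)))

/-- Jacobi function `J_m^{(α,β)}(t) = κ(α,β,m)·(1-t)^{α/2}·t^{β/2}·Q_m^{(α,β)}(t)`. -/
def jacJ (α β : ℝ) (m : ℕ) (t : ℝ) : ℝ :=
  jacCoef α β m * (1 - t) ^ (α / 2) * t ^ (β / 2) * jacQ α β m t

/-- `dd n ξ = min(n+ξ, n)` (for `ξ ≥ 1-n`), written as a total function into `ℕ`. -/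
def dd (n : ℕ) (ξ : ℤ) : ℕ := n - (-ξ).toNat

lemma dd_le (n : ℕ) (ξ : ℤ) : dd n ξ ≤ n := Nat.sub_le _ _

/-- The set `Ω_n = {ξ ∈ ℤ : ξ ≥ -n+1}` as a subtype. -/
abbrev Om (n : ℕ) : Type := {ξ : ℤ // 1 - (n : ℤ) ≤ ξ}

/-- The entry `γ(a)_{ξ,j,k} = κ(α,|ξ|,j)·κ(α,|ξ|,k)·
∫₀¹ a(√t)·Q_j^{(α,|ξ|)}(t)·Q_k^{(α,|ξ|)}(t)·(1-t)^α·t^{|ξ|} dt`. -/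
def gammaEnt (α : ℝ) (a : ℝ → ℂ) (ξ : ℤ) (j k : ℕ) : ℂ :=
  ((jacCoef α ξ.natAbs j * jacCoef α ξ.natAbs k : ℝ) : ℂ) *
    ∫ t in (0:ℝ)..1, a (Real.sqrt t) *
      ((jacQ α ξ.natAbs j t * jacQ α ξ.natAbs k t * (1 - t) ^ α * t ^ (ξ.natAbs) : ℝ) : ℂ)

/-- The matrix `γ(a)_ξ ∈ M_{d_ξ}(ℂ)`. -/
def gammaMat (n : ℕ) (α : ℝ) (a : ℝ → ℂ) (ξ : ℤ) :
    Matrix (Fin (dd n ξ)) (Fin (dd n ξ)) ℂ :=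
  Matrix.of fun j k => gammaEnt α a ξ (j : ℕ) (k : ℕ)

/-- Bounded measurable functions on `[0,1)` having a finite limit at `1⁻`. -/
def LinfLim (a : ℝ → ℂ) : Prop :=
  Measurable a ∧ (∃ C : ℝ, ∀ r ∈ Set.Ico (0:ℝ) 1, ‖a r‖ ≤ C) ∧
    ∃ ω : ℂ, Tendsto a (nhdsWithin 1 (Set.Ico (0:ℝ) 1)) (nhds ω)

/-- The generating symbol `g_p(t) = Q_p^{(α,0)}(t²)`, as a complex-valued function. -/
def gSym (α : ℝ) (p : ℕ) (t : ℝ) : ℂ := ((jacQ α 0 p (t ^ 2) : ℝ) : ℂ)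

/-- `⟨A w, w⟩ = Σ_{j,k} conj(w_j)·A_{j,k}·w_k`. -/
def innerForm {d : ℕ} (A : Matrix (Fin d) (Fin d) ℂ) (w : Fin d → ℂ) : ℂ :=
  ∑ j : Fin d, ∑ k : Fin d, (starRingEnd ℂ) (w j) * A j k * w k

/-!
Suppose every element of the algebra has the same quadratic form at `u` and at `v`. For the
symbols `a_s = 1_{r² < s}` the entries of `γ(a_s)_ξ` are `∫₀ˢ κ_j Q_j κ_k Q_k ρ`, where
`ρ(t) = (1-t)^α t^|ξ|`, so differentiating `⟨γ(a_s) γ(a_{s'}) u, u⟩` in `s` and in `s'` and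
dropping `ρ(s) ρ(s')` gives `conj P_u(s) · P_u(s') · K(s, s') = conj P_v(s) · P_v(s') · K(s, s')`
on `(0,1)²`, where `P_w = Σ_j w_j κ_j Q_j` and `K(s, ·) = Σ_k κ_k² Q_k(s) Q_k` is a nonzero
polynomial. Fixing `s` with `P_u(s) ≠ 0`, the polynomials `conj P_u(s) · P_u` and
`conj P_v(s) · P_v` agree at infinitely many points, hence coincide; as `Q_j` has degree exactly
`j`, this makes `u` and `v` proportional.
-/

open Polynomial Set ComplexConjugate

lemma gbinom_pos {x : ℝ} {j : ℕ} (h : (j : ℝ) - 1 < x) : 0 < gbinom x j := by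
  refine div_pos (Finset.prod_pos fun i hi => ?_) (mod_cast j.factorial_pos)
  have : (i : ℝ) + 1 ≤ j := mod_cast Finset.mem_range.mp hi
  linarith

lemma jacCoef_pos {α β : ℝ} (hα : -1 < α) (hβ : 0 ≤ β) (m : ℕ) : 0 < jacCoef α β m := by
  have hm : (0 : ℝ) ≤ m := m.cast_nonneg
  refine Real.sqrt_pos.mpr (div_pos (mul_pos (mul_pos ?_ ?_) ?_) (mul_pos ?_ ?_))
  · linarith
  · exact Real.Gamma_pos_of_pos (by linarith)
  · exact mod_cast m.factorial_pos
  · exact Real.Gamma_pos_of_pos (by linarith)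
  · exact Real.Gamma_pos_of_pos (by linarith)

lemma jacQ_zero (α β t : ℝ) : jacQ α β 0 t = 1 := by
  simp [jacQ, gbinom]

def jacPoly (α β : ℝ) (m : ℕ) : ℂ[X] :=
  C (jacCoef α β m : ℂ) * ∑ k ∈ Finset.range (m + 1),
    C ((gbinom (α + β + m + k) k * gbinom (β + m) (m - k) * (-1) ^ (m - k) : ℝ) : ℂ) * X ^ k

lemma eval_jacPoly (α β : ℝ) (m : ℕ) (t : ℝ) :
    (jacPoly α β m).eval (t : ℂ) = ((jacCoef α β m * jacQ α β m t : ℝ) : ℂ) := by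
  simp [jacPoly, jacQ, eval_finsetSum]

lemma conj_eval_jacPoly (α β : ℝ) (m : ℕ) (t : ℝ) :
    conj ((jacPoly α β m).eval (t : ℂ)) = (jacPoly α β m).eval (t : ℂ) := by
  rw [eval_jacPoly, Complex.conj_ofReal]

lemma degree_jacPoly {α β : ℝ} (hα : -1 < α) (hβ : 0 ≤ β) (m : ℕ) :
    (jacPoly α β m).degree = m := by
  have hκ : (jacCoef α β m : ℂ) ≠ 0 := mod_cast (jacCoef_pos hα hβ m).ne'
  rw [jacPoly, degree_C_mul hκ]
  refine degree_eq_of_le_of_coeff_ne_zero ?_ ?_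
  · refine (degree_sum_le _ _).trans (Finset.sup_le fun k hk => ?_)
    exact (degree_C_mul_X_pow_le _ _).trans (mod_cast Finset.mem_range_succ_iff.mp hk)
  · have hm : (0 : ℝ) ≤ m := m.cast_nonneg
    simp only [finsetSum_coeff, coeff_C_mul_X_pow, Finset.sum_ite_eq, Finset.self_mem_range_succ,
      if_true, Nat.sub_self, pow_zero, mul_one]
    rw [Complex.ofReal_ne_zero]
    simpa [gbinom] using (gbinom_pos (x := α + β + m + m) (j := m) (by linarith)).ne'

lemma linearIndependent_jacPoly {α β : ℝ} (hα : -1 < α) (hβ : 0 ≤ β) :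
    LinearIndependent ℂ (jacPoly α β) :=
  (⟨jacPoly α β, degree_jacPoly hα hβ⟩ : Polynomial.Sequence ℂ).linearIndependent

def jacComb (α β : ℝ) (d : ℕ) : (Fin d → ℂ) →ₗ[ℂ] ℂ[X] :=
  Fintype.linearCombination ℂ fun j : Fin d => jacPoly α β j

lemma eval_jacComb (α β : ℝ) {d : ℕ} (w : Fin d → ℂ) (z : ℂ) :
    (jacComb α β d w).eval z = ∑ j, w j * (jacPoly α β j).eval z := by
  simp [jacComb, Fintype.linearCombination_apply, eval_finsetSum]

lemma jacComb_injective {α β : ℝ} (hα : -1 < α) (hβ : 0 ≤ β) (d : ℕ) :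
    Function.Injective (jacComb α β d) :=
  linearIndependent_iff_injective_fintypeLinearCombination.mp
    ((linearIndependent_jacPoly hα hβ).comp _ Fin.val_injective)

/-- The Christoffel–Darboux kernel `K(s, ·) = Σ_{k<d} κ_k² Q_k(s) Q_k(·)`. -/
def jacKernel (α β : ℝ) (d : ℕ) (s : ℝ) : ℂ[X] :=
  jacComb α β d fun k => (jacPoly α β k).eval (s : ℂ)

lemma eval_jacKernel (α β : ℝ) (d : ℕ) (s : ℝ) (z : ℂ) :
    (jacKernel α β d s).eval z =
      ∑ k : Fin d, (jacPoly α β k).eval (s : ℂ) * (jacPoly α β k).eval z :=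
  eval_jacComb α β _ z

lemma jacKernel_ne_zero {α β : ℝ} (hα : -1 < α) (hβ : 0 ≤ β) {d : ℕ} (hd : 0 < d) (s : ℝ) :
    jacKernel α β d s ≠ 0 := by
  rw [jacKernel, ← map_zero (jacComb α β d), (jacComb_injective hα hβ d).ne_iff]
  refine Function.ne_iff.mpr ⟨⟨0, hd⟩, ?_⟩
  simpa [eval_jacPoly, jacQ_zero] using (jacCoef_pos hα hβ 0).ne'

lemma finite_setOf_eval_ofReal_eq_zero {p : ℂ[X]} (hp : p ≠ 0) :
    {x : ℝ | p.eval (x : ℂ) = 0}.Finite :=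
  (p.finite_setOfPred_isRoot hp).preimage Complex.ofReal_injective.injOn

lemma exists_smul_eq_smul_of_conj_mul_eq {p q : ℂ[X]} (K : ℝ → ℂ[X]) {S : Set ℝ}
    (hS : S.Infinite) (hp : p ≠ 0) (hK : ∀ s ∈ S, K s ≠ 0)
    (h : ∀ s ∈ S, ∀ x ∈ S, conj (p.eval (s : ℂ)) * p.eval (x : ℂ) * (K s).eval (x : ℂ) =
      conj (q.eval (s : ℂ)) * q.eval (x : ℂ) * (K s).eval (x : ℂ)) :
    ∃ s : ℝ, p.eval (s : ℂ) ≠ 0 ∧ conj (p.eval (s : ℂ)) • p = conj (q.eval (s : ℂ)) • q := by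
  obtain ⟨s, hsS, hps⟩ := (hS.sdiff (finite_setOf_eval_ofReal_eq_zero hp)).nonempty
  refine ⟨s, hps, sub_eq_zero.mp (by_contra fun hne => ?_)⟩
  refine Infinite.mono (fun x hx => ?_) (hS.sdiff (finite_setOf_eval_ofReal_eq_zero (hK s hsS)))
    (finite_setOf_eval_ofReal_eq_zero hne)
  obtain ⟨hxS, hKx⟩ := hx
  have := h s hsS x hxS
  simp only [mem_ofPred_eq, eval_sub, eval_smul, smul_eq_mul] at hKx ⊢
  exact (mul_eq_zero.mp (by linear_combination this :
    (conj (p.eval (s : ℂ)) * p.eval (x : ℂ) - conj (q.eval (s : ℂ)) * q.eval (x : ℂ)) *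
      (K s).eval (x : ℂ) = 0)).resolve_right hKx

def sqIndicator (s : ℝ) : ℝ → ℂ := {r : ℝ | r ^ 2 < s}.indicator 1

lemma linfLim_sqIndicator {s : ℝ} (hs : s < 1) : LinfLim (sqIndicator s) := by
  refine ⟨measurable_const.indicator (measurableSet_lt (by fun_prop) measurable_const),
    ⟨1, fun r _ => ?_⟩, 0, tendsto_const_nhds.congr' ?_⟩
  · unfold sqIndicator
    exact (norm_indicator_le_norm_self _ _).trans (by simp)
  · have : {r : ℝ | s < r ^ 2} ∈ nhds (1 : ℝ) :=
      (isOpen_lt continuous_const (continuous_pow 2)).mem_nhds (by rwa [mem_ofPred_eq, one_pow])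
    filter_upwards [mem_nhdsWithin_of_mem_nhds this] with r hr
    simp [sqIndicator, not_lt.mpr hr.le]

def jacWeight (α : ℝ) (b : ℕ) (t : ℝ) : ℝ := (1 - t) ^ α * t ^ b

lemma jacWeight_pos (α : ℝ) (b : ℕ) {t : ℝ} (ht : t ∈ Ioo 0 1) : 0 < jacWeight α b t :=
  mul_pos (Real.rpow_pos_of_pos (by linarith [ht.2]) α) (pow_pos ht.1 b)

lemma continuousOn_jacWeight (α : ℝ) (b : ℕ) : ContinuousOn (jacWeight α b) (Iio 1) :=
  ((continuousOn_const.sub continuousOn_id).rpow_const fun _ ht =>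
    Or.inl (sub_ne_zero.mpr (ne_of_lt ht).symm)).mul (continuousOn_pow b)

lemma gammaEnt_sqIndicator (α : ℝ) (ξ : ℤ) (j k : ℕ) {s : ℝ} (hs : s ∈ Icc 0 1) :
    gammaEnt α (sqIndicator s) ξ j k = ∫ t in (0 : ℝ)..s,
      (jacPoly α ξ.natAbs j).eval (t : ℂ) * (jacPoly α ξ.natAbs k).eval (t : ℂ) *
        (jacWeight α ξ.natAbs t : ℂ) := by
  have hset : Ioc (0 : ℝ) 1 ∩ Ioo 0 s = Ioo 0 s := by
    rw [Ioc_inter_Ioo_of_right_le hs.2, max_self]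
  rw [gammaEnt, ← intervalIntegral.integral_const_mul, intervalIntegral.integral_of_le zero_le_one,
    intervalIntegral.integral_of_le hs.1, integral_Ioc_eq_integral_Ioo (x := 0) (y := s),
    ← hset, ← setIntegral_indicator measurableSet_Ioo]
  refine setIntegral_congr_fun measurableSet_Ioc fun t ht => ?_
  simp only [sqIndicator, indicator_apply, mem_ofPred_eq, Real.sq_sqrt ht.1.le, mem_Ioo, ht.1,
    true_and, eval_jacPoly, jacWeight, Pi.one_apply]
  split_ifs <;> push_cast <;> ring

lemma innerForm_mul {d : ℕ} (A B : Matrix (Fin d) (Fin d) ℂ) (w : Fin d → ℂ) :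
    innerForm (A * B) w = ∑ k, (∑ j, conj (w j) * A j k) * (∑ l, B k l * w l) := by
  simp only [innerForm, Matrix.mul_apply, Finset.sum_mul, Finset.mul_sum]
  conv_lhs => enter [2, j]; rw [Finset.sum_comm]
  rw [Finset.sum_comm]
  refine Finset.sum_congr rfl fun k _ => ?_
  rw [Finset.sum_comm]
  exact Finset.sum_congr rfl fun j _ => Finset.sum_congr rfl fun l _ => by ring

lemma sum_deriv_mul_deriv_eq_of_eqOn {ι 𝕜 𝔸 : Type*} [NontriviallyNormedField 𝕜] [NormedRing 𝔸]
    [NormedAlgebra 𝕜 𝔸] (S : Finset ι) {U : Set 𝕜} (hU : IsOpen U)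
    {f g p q f' g' p' q' : ι → 𝕜 → 𝔸}
    (hf : ∀ k, ∀ x ∈ U, HasDerivAt (f k) (f' k x) x)
    (hg : ∀ k, ∀ y ∈ U, HasDerivAt (g k) (g' k y) y)
    (hp : ∀ k, ∀ x ∈ U, HasDerivAt (p k) (p' k x) x)
    (hq : ∀ k, ∀ y ∈ U, HasDerivAt (q k) (q' k y) y)
    (h : ∀ x ∈ U, ∀ y ∈ U, ∑ k ∈ S, f k x * g k y = ∑ k ∈ S, p k x * q k y) :
    ∀ x ∈ U, ∀ y ∈ U, ∑ k ∈ S, f' k x * g' k y = ∑ k ∈ S, p' k x * q' k y := by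
  intro x hx y hy
  have hx' : ∀ y ∈ U, ∑ k ∈ S, f' k x * g k y = ∑ k ∈ S, p' k x * q k y := fun y hy =>
    (HasDerivAt.fun_sum fun k _ => (hf k x hx).mul_const (g k y)).unique <|
      (HasDerivAt.fun_sum fun k _ => (hp k x hx).mul_const (q k y)).congr_of_eventuallyEq <|
        Set.EqOn.eventuallyEq_of_mem (fun x' hx' => h x' hx' y hy) (hU.mem_nhds hx)
  exact (HasDerivAt.fun_sum fun k _ => (hg k y hy).const_mul (f' k x)).unique <|
    (HasDerivAt.fun_sum fun k _ => (hq k y hy).const_mul (p' k x)).congr_of_eventuallyEq <|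
      Set.EqOn.eventuallyEq_of_mem hx' (hU.mem_nhds hy)

lemma hasDerivAt_gammaEnt_sqIndicator (α : ℝ) (ξ : ℤ) (j k : ℕ) {s : ℝ} (hs : s ∈ Ioo 0 1) :
    HasDerivAt (fun x => gammaEnt α (sqIndicator x) ξ j k)
      ((jacPoly α ξ.natAbs j).eval (s : ℂ) * (jacPoly α ξ.natAbs k).eval (s : ℂ) *
        (jacWeight α ξ.natAbs s : ℂ)) s := by
  have hcont : ContinuousOn (fun t : ℝ => (jacPoly α ξ.natAbs j).eval (t : ℂ) *
      (jacPoly α ξ.natAbs k).eval (t : ℂ) * (jacWeight α ξ.natAbs t : ℂ)) (Iio 1) :=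
    (((jacPoly α ξ.natAbs j).continuous.comp Complex.continuous_ofReal).mul
      ((jacPoly α ξ.natAbs k).continuous.comp Complex.continuous_ofReal)).continuousOn.mul
      (Complex.continuous_ofReal.comp_continuousOn (continuousOn_jacWeight α ξ.natAbs))
  have hsub : uIcc 0 s ⊆ Iio 1 := by
    rw [uIcc_of_le hs.1.le]
    exact fun t ht => ht.2.trans_lt hs.2
  have hFTC := intervalIntegral.integral_hasDerivAt_right (hcont.mono hsub).intervalIntegrable
    (hcont.stronglyMeasurableAtFilter isOpen_Iio _ hs.2) (hcont.continuousAt (Iio_mem_nhds hs.2))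
  refine hFTC.congr_of_eventuallyEq ?_
  filter_upwards [Ioo_mem_nhds hs.1 hs.2] with x hx
  exact gammaEnt_sqIndicator α ξ j k (Ioo_subset_Icc_self hx)

section

variable {α : ℝ} {ξ : ℤ} {d : ℕ}

lemma hasDerivAt_sum_conj_mul_gammaEnt_sqIndicator (w : Fin d → ℂ) (k : ℕ) {s : ℝ}
    (hs : s ∈ Ioo 0 1) :
    HasDerivAt (fun x => ∑ j : Fin d, conj (w j) * gammaEnt α (sqIndicator x) ξ j k)
      ((jacWeight α ξ.natAbs s : ℂ) * conj ((jacComb α ξ.natAbs d w).eval (s : ℂ)) *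
        (jacPoly α ξ.natAbs k).eval (s : ℂ)) s := by
  refine (HasDerivAt.fun_sum fun (j : Fin d) _ =>
    (hasDerivAt_gammaEnt_sqIndicator α ξ j k hs).const_mul (conj (w j))).congr_deriv ?_
  simp only [eval_jacComb, map_sum, map_mul, conj_eval_jacPoly, Finset.mul_sum, Finset.sum_mul]
  exact Finset.sum_congr rfl fun j _ => by ring

lemma hasDerivAt_sum_gammaEnt_sqIndicator_mul (w : Fin d → ℂ) (k : ℕ) {s : ℝ}
    (hs : s ∈ Ioo 0 1) :
    HasDerivAt (fun x => ∑ l : Fin d, gammaEnt α (sqIndicator x) ξ k l * w l)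
      ((jacWeight α ξ.natAbs s : ℂ) * (jacPoly α ξ.natAbs k).eval (s : ℂ) *
        (jacComb α ξ.natAbs d w).eval (s : ℂ)) s := by
  refine (HasDerivAt.fun_sum fun (l : Fin d) _ =>
    (hasDerivAt_gammaEnt_sqIndicator α ξ k l hs).mul_const (w l)).congr_deriv ?_
  simp only [eval_jacComb, Finset.mul_sum]
  exact Finset.sum_congr rfl fun l _ => by ring

lemma conj_mul_jacKernel_eq_of_innerForm_eq {n : ℕ} {u v : Fin (dd n ξ) → ℂ}
    (h : ∀ s ∈ Ioo (0 : ℝ) 1, ∀ s' ∈ Ioo (0 : ℝ) 1,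
      innerForm (gammaMat n α (sqIndicator s) ξ * gammaMat n α (sqIndicator s') ξ) u =
        innerForm (gammaMat n α (sqIndicator s) ξ * gammaMat n α (sqIndicator s') ξ) v)
    {s s' : ℝ} (hs : s ∈ Ioo 0 1) (hs' : s' ∈ Ioo 0 1) :
    conj ((jacComb α ξ.natAbs _ u).eval (s : ℂ)) * (jacComb α ξ.natAbs _ u).eval (s' : ℂ) *
        (jacKernel α ξ.natAbs (dd n ξ) s).eval (s' : ℂ) =
      conj ((jacComb α ξ.natAbs _ v).eval (s : ℂ)) * (jacComb α ξ.natAbs _ v).eval (s' : ℂ) *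
        (jacKernel α ξ.natAbs (dd n ξ) s).eval (s' : ℂ) := by
  have hmixed := sum_deriv_mul_deriv_eq_of_eqOn (Finset.univ : Finset (Fin (dd n ξ))) isOpen_Ioo
    (fun k _ hx => hasDerivAt_sum_conj_mul_gammaEnt_sqIndicator u (k : ℕ) hx)
    (fun k _ hy => hasDerivAt_sum_gammaEnt_sqIndicator_mul u (k : ℕ) hy)
    (fun k _ hx => hasDerivAt_sum_conj_mul_gammaEnt_sqIndicator v (k : ℕ) hx)
    (fun k _ hy => hasDerivAt_sum_gammaEnt_sqIndicator_mul v (k : ℕ) hy)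
    (by simpa only [innerForm_mul, gammaMat, Matrix.of_apply] using h) s hs s' hs'
  have hfactor : ∀ w : Fin (dd n ξ) → ℂ,
      ∑ k : Fin (dd n ξ),
          (jacWeight α ξ.natAbs s : ℂ) * conj ((jacComb α ξ.natAbs _ w).eval (s : ℂ)) *
            (jacPoly α ξ.natAbs k).eval (s : ℂ) *
          ((jacWeight α ξ.natAbs s' : ℂ) * (jacPoly α ξ.natAbs k).eval (s' : ℂ) *
            (jacComb α ξ.natAbs _ w).eval (s' : ℂ)) =
        (jacWeight α ξ.natAbs s * jacWeight α ξ.natAbs s' : ℝ) *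
          (conj ((jacComb α ξ.natAbs _ w).eval (s : ℂ)) * (jacComb α ξ.natAbs _ w).eval (s' : ℂ) *
            (jacKernel α ξ.natAbs (dd n ξ) s).eval (s' : ℂ)) := fun w => by
    rw [eval_jacKernel, Finset.mul_sum, Finset.mul_sum]
    exact Finset.sum_congr rfl fun k _ => by push_cast; ring
  rw [hfactor, hfactor] at hmixed
  have hρ : ((jacWeight α ξ.natAbs s * jacWeight α ξ.natAbs s' : ℝ) : ℂ) ≠ 0 :=
    mod_cast (mul_pos (jacWeight_pos α _ hs) (jacWeight_pos α _ hs')).ne'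
  exact mul_left_cancel₀ hρ hmixed

end

theorem statement13_general (n : ℕ) (α : ℝ) (hα : -1 < α) (ξ : ℤ)
    (hξ : 1 - (n : ℤ) ≤ ξ)
    (u v : Fin (dd n ξ) → ℂ)
    (huv : LinearIndependent ℂ ![u, v]) :
    ∃ X ∈ StarAlgebra.adjoin ℂ
        {A : ∀ η : Om n, Matrix (Fin (dd n η.1)) (Fin (dd n η.1)) ℂ |
          ∃ a : ℝ → ℂ, LinfLim a ∧ A = fun η : Om n => gammaMat n α a η.1},
      innerForm (X ⟨ξ, hξ⟩) u ≠ innerForm (X ⟨ξ, hξ⟩) v := by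
  by_contra! hsame
  have hprod : ∀ s ∈ Ioo (0 : ℝ) 1, ∀ s' ∈ Ioo (0 : ℝ) 1,
      innerForm (gammaMat n α (sqIndicator s) ξ * gammaMat n α (sqIndicator s') ξ) u =
        innerForm (gammaMat n α (sqIndicator s) ξ * gammaMat n α (sqIndicator s') ξ) v := by
    intro s hs s' hs'
    simpa only [Pi.mul_apply] using hsame _
      (mul_mem (StarAlgebra.subset_adjoin ℂ _ ⟨_, linfLim_sqIndicator hs.2, rfl⟩)
        (StarAlgebra.subset_adjoin ℂ _ ⟨_, linfLim_sqIndicator hs'.2, rfl⟩))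
  have hβ : (0 : ℝ) ≤ ξ.natAbs := Nat.cast_nonneg _
  have hu : u ≠ 0 := by simpa using huv.ne_zero 0
  obtain ⟨j, -⟩ := Function.ne_iff.mp hu
  obtain ⟨s, hs, hprop⟩ := exists_smul_eq_smul_of_conj_mul_eq _ (Ioo_infinite zero_lt_one)
    ((map_ne_zero_iff _ (jacComb_injective hα hβ _)).mpr hu)
    (fun s _ => jacKernel_ne_zero hα hβ j.pos s)
    (fun s hs s' hs' => conj_mul_jacKernel_eq_of_innerForm_eq hprod hs hs')
  have hdep := LinearIndependent.pair_iff.mp huv _ (-conj ((jacComb α ξ.natAbs _ v).eval (s : ℂ)))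
    (jacComb_injective hα hβ _ (by rw [map_add, map_smul, map_smul, hprop, map_zero, neg_smul,
      add_neg_cancel]))
  exact hs (by simpa using hdep.1)

/-- separation of pure states associated to the same frequency `ξ`. -/
theorem statement13 (n : ℕ) (hn : 1 ≤ n) (α : ℝ) (hα : -1 < α) (ξ : ℤ)
    (hξ : 1 - (n : ℤ) ≤ ξ)
    (u v : Fin (dd n ξ) → ℂ)
    (hu : ∑ j, ‖u j‖ ^ 2 = 1) (hv : ∑ j, ‖v j‖ ^ 2 = 1)
    (huv : LinearIndependent ℂ ![u, v]) :
    ∃ X ∈ StarAlgebra.adjoin ℂ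
        {A : ∀ η : Om n, Matrix (Fin (dd n η.1)) (Fin (dd n η.1)) ℂ |
          ∃ a : ℝ → ℂ, LinfLim a ∧ A = fun η : Om n => gammaMat n α a η.1},
      innerForm (X ⟨ξ, hξ⟩) u ≠ innerForm (X ⟨ξ, hξ⟩) v :=
  statement13_general n α hα ξ hξ u v huv
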